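/- arXiv:2601.17964 — 3 statements merged into one kernel-verified Lean document; each statement's English description precedes it below -/
import Mathlib

section
/- Let x be continuously differentiable, weakly decreasing, with x(1)=1, satisfying x(p) + (p-c)x'(p) > 0 on [c,1]. Let φ(μ,c) solve (φ-c)x(φ) = μ(1-c). Then the pass-through φ_c(μ,c) = x(φ)(1-φ) / ((1-c)(x(φ) + (φ-c)x'(φ))) satisfies φ_c(μ,c) ≥ 1-μ. -/
/-!
Write `D = x φ + (φ - c) x'(φ)` and use the margin equation to rewrite `(1 - μ)(1 - c)` as
`(1 - c) - (φ - c) x φ ≥ 0`. Demand is decreasing, so `x' ≤ 0` gives `D ≤ x φ`, and `x φ ≥ x 1 = 1`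
gives `(1 - c) - (φ - c) x φ ≤ 1 - φ`; multiplying the two bounds yields `(1 - μ)(1 - c) D ≤ x φ (1 - φ)`.
-/

open Set

lemma AntitoneOn.deriv_nonpos_of_accPt {g : ℝ → ℝ} {s : Set ℝ} {x : ℝ} (hg : AntitoneOn g s)
    (hx : AccPt x (Filter.principal s)) : deriv g x ≤ 0 := by
  by_cases hd : DifferentiableAt ℝ g x
  · exact hd.hasDerivAt.hasDerivWithinAt.nonpos_of_antitoneOn hx hg
  · simp [deriv_zero_of_not_differentiableAt hd]

theorem stmt_3_general (x : ℝ → ℝ) (c μ φ : ℝ)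
    (hx_anti : AntitoneOn x (Set.Icc 0 1))
    (hx1 : x 1 = 1)
    (hc : c ∈ Set.Ico (0 : ℝ) 1)
    (hμ : μ ∈ Set.Icc (0 : ℝ) 1)
    (hinv : ∀ p ∈ Set.Icc c 1, 0 < x p + (p - c) * deriv x p)
    (hφ : φ ∈ Set.Icc c 1)
    (heq : (φ - c) * x φ = μ * (1 - c)) :
    x φ * (1 - φ) / ((1 - c) * (x φ + (φ - c) * deriv x φ)) ≥ 1 - μ := by
  have hφ01 : φ ∈ Icc (0 : ℝ) 1 := ⟨hc.1.trans hφ.1, hφ.2⟩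
  have hxφ : 1 ≤ x φ := hx1 ▸ hx_anti hφ01 (right_mem_Icc.2 zero_le_one) hφ.2
  have hderiv : deriv x φ ≤ 0 := hx_anti.deriv_nonpos_of_accPt <|
    IsPreconnected.preperfect_of_nontrivial
      ⟨0, left_mem_Icc.2 zero_le_one, 1, right_mem_Icc.2 zero_le_one, zero_ne_one⟩
      isPreconnected_Icc φ hφ01
  have hD := hinv φ hφ
  have hc1 : 0 < 1 - c := sub_pos.2 hc.2
  have hμc : 0 ≤ (1 - μ) * (1 - c) := mul_nonneg (sub_nonneg.2 hμ.2) hc1.le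
  rw [ge_iff_le, le_div_iff₀ (by positivity)]
  calc (1 - μ) * ((1 - c) * (x φ + (φ - c) * deriv x φ))
      ≤ (1 - μ) * (1 - c) * x φ := by
        rw [← mul_assoc]
        exact mul_le_mul_of_nonneg_left (by nlinarith [hφ.1]) hμc
    _ = ((1 - c) - (φ - c) * x φ) * x φ := by rw [heq]; ring
    _ ≤ (1 - φ) * x φ := mul_le_mul_of_nonneg_right (by nlinarith [hφ.1]) (by linarith)
    _ = x φ * (1 - φ) := mul_comm _ _

/-- universal lower bound on pass-through, φ_c(μ,c) ≥ 1 - μ. -/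
theorem stmt_3 (x : ℝ → ℝ) (c μ φ : ℝ)
    (hx_cont : ContDiffOn ℝ 1 x (Set.Icc 0 1))
    (hx_anti : AntitoneOn x (Set.Icc 0 1))
    (hx1 : x 1 = 1)
    (hc : c ∈ Set.Ico (0 : ℝ) 1)
    (hμ : μ ∈ Set.Icc (0 : ℝ) 1)
    (hinv : ∀ p ∈ Set.Icc c 1, 0 < x p + (p - c) * deriv x p)
    (hφ : φ ∈ Set.Icc c 1)
    (heq : (φ - c) * x φ = μ * (1 - c)) :
    x φ * (1 - φ) / ((1 - c) * (x φ + (φ - c) * deriv x φ)) ≥ 1 - μ :=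
  stmt_3_general x c μ φ hx_anti hx1 hc hμ hinv hφ heq
end

section
/- For linear demand x(p) = 1 + b(1-p) with b = 1/(1-c) and d = 1-c, the margin equation (p-c)x(p) = μd·x(1) has solution p = 1 - d·√(1-μ), and the pass-through rate φ_c(μ,c) equals (1 + √(1-μ))/2. -/
/-!
Write `d = 1 - c` and `s = √(1 - μ)`. At `p = 1 - d s` the demand `1 + (1 - p)/d` equals `1 + s`
and the margin `p - c` equals `d (1 - s)`, so the margin equation reduces to `1 - s² = μ`. In the
pass-through ratio the denominator `x(p) - (p - c)/d` becomes `2 s` while `1 - p = d s`, leaving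
`(1 + s)/2`.
-/

namespace LinearDemand

variable {c s : ℝ}

lemma demand_eq (hc : 1 - c ≠ 0) : 1 + 1 / (1 - c) * (1 - (1 - (1 - c) * s)) = 1 + s := by
  field_simp
  ring

lemma margin_mul_demand_eq (hc : 1 - c ≠ 0) :
    (1 - (1 - c) * s - c) * (1 + 1 / (1 - c) * (1 - (1 - (1 - c) * s)))
      = (1 - s ^ 2) * (1 - c) := by
  rw [demand_eq hc]
  ring

lemma passThrough_eq (hc : 1 - c ≠ 0) (hs : s ≠ 0) :
    (1 + 1 / (1 - c) * (1 - (1 - (1 - c) * s))) * (1 - (1 - (1 - c) * s)) /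
        ((1 - c) * ((1 + 1 / (1 - c) * (1 - (1 - (1 - c) * s)))
          + (1 - (1 - c) * s - c) * -(1 / (1 - c))))
      = (1 + s) / 2 := by
  have hden : (1 + s) + (1 - (1 - c) * s - c) * -(1 / (1 - c)) = 2 * s := by
    field_simp
    ring
  rw [demand_eq hc, hden]
  field_simp
  ring

end LinearDemand

/-- for linear demand x(p) = 1 + b(1-p) at maximal slope b = 1/(1-c),
the margin equation has solution p = 1 - (1-c)√(1-μ), and the pass-through
x(p)(1-p)/((1-c)(x(p)+(p-c)x'(p))) (with x'(p) = -b) equals (1+√(1-μ))/2. -/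
theorem stmt_6 (c μ : ℝ) (hc : c ∈ Set.Ico (0 : ℝ) 1) (hμ : μ ∈ Set.Ico (0 : ℝ) 1) :
    let d := 1 - c
    let b := 1 / d
    let p := 1 - d * Real.sqrt (1 - μ)
    ((p - c) * (1 + b * (1 - p)) = μ * d * (1 + b * (1 - 1))) ∧
    ((1 + b * (1 - p)) * (1 - p) / ((1 - c) * ((1 + b * (1 - p)) + (p - c) * (-b)))
      = (1 + Real.sqrt (1 - μ)) / 2) := by
  intro d b p
  have hd : 1 - c ≠ 0 := sub_ne_zero.mpr hc.2.ne'
  have hμ' : 0 < 1 - μ := sub_pos.mpr hμ.2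
  refine ⟨?_, LinearDemand.passThrough_eq hd (Real.sqrt_pos.mpr hμ').ne'⟩
  rw [LinearDemand.margin_mul_demand_eq hd, Real.sq_sqrt hμ'.le]
  ring
end

section
/- For linear demand x(p) = 1 + b(1-p) with b ∈ [0, 1/(1-c)], the pass-through rate φ_c(μ,c) = x(p)(1-p)/((1-c)(x(p)+(p-c)x'(p))) at the price p solving the margin equation satisfies φ_c(μ,c) ≤ (1 + √(1-μ))/2 for all μ ∈ [0,1]. -/
/-!
Write `q = p - c` and `r = 1 - p`, so that `1 - c = q + r`, demand is `x = 1 + b r`, and the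
denominator is `(q + r) D` with marginal profit `D = x - q b = 1 + b (r - q) ≥ 1 - b (q + r) ≥ 0`.
The bound says `B := 2 x r - (q + r) D ≤ (q + r) D √(1 - μ)`. When `B > 0` we square it; since
`μ (q + r) = q x`, it becomes the polynomial identity
`(q + r) D² (q + r - q x) - B² = q (1 - b (q + r)) (B + r D (D + 1))`,
whose right side is nonnegative because `b ≤ 1 / (1 - c)`, and vanishes at `b = 1 / (1 - c)`.
-/

namespace LinearDemand

variable {b q r μ : ℝ}

theorem marginal_profit_nonneg (hb : 0 ≤ b) (hr : 0 ≤ r)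
    (hbd : b * (q + r) ≤ 1) : 0 ≤ 1 + b * (r - q) := by
  nlinarith [mul_nonneg hb hr]

theorem excess_sq_le (hb : 0 ≤ b) (hq : 0 ≤ q) (hr : 0 ≤ r) (hbd : b * (q + r) ≤ 1)
    (hμ : q * (1 + b * r) = μ * (q + r))
    (hB : 0 ≤ 2 * (1 + b * r) * r - (q + r) * (1 + b * (r - q))) :
    (2 * (1 + b * r) * r - (q + r) * (1 + b * (r - q))) ^ 2
      ≤ ((q + r) * (1 + b * (r - q))) ^ 2 * (1 - μ) := by
  set D := 1 + b * (r - q)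
  set B := 2 * (1 + b * r) * r - (q + r) * D
  have hD : 0 ≤ D := marginal_profit_nonneg hb hr hbd
  have identity : (q + r) * D ^ 2 * ((q + r) - q * (1 + b * r)) - B ^ 2
      = q * (1 - b * (q + r)) * (B + r * D * (D + 1)) := by
    simp only [B, D]; ring
  have gap_nonneg : 0 ≤ q * (1 - b * (q + r)) * (B + r * D * (D + 1)) := by
    have : 0 ≤ r * D * (D + 1) := by positivity
    exact mul_nonneg (mul_nonneg hq (by linarith)) (by linarith)
  calc B ^ 2 ≤ (q + r) * D ^ 2 * ((q + r) - q * (1 + b * r)) := by linarith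
    _ = ((q + r) * D) ^ 2 * (1 - μ) := by rw [hμ]; ring

theorem excess_le_mul_sqrt (hb : 0 ≤ b) (hq : 0 ≤ q) (hr : 0 ≤ r) (hbd : b * (q + r) ≤ 1)
    (hμ : q * (1 + b * r) = μ * (q + r)) :
    2 * (1 + b * r) * r - (q + r) * (1 + b * (r - q))
      ≤ (q + r) * (1 + b * (r - q)) * √(1 - μ) := by
  have hK : 0 ≤ (q + r) * (1 + b * (r - q)) :=
    mul_nonneg (by linarith) (marginal_profit_nonneg hb hr hbd)
  rcases le_or_gt (2 * (1 + b * r) * r - (q + r) * (1 + b * (r - q))) 0 with hB | hB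
  · exact hB.trans (by positivity)
  · calc _ ≤ |2 * (1 + b * r) * r - (q + r) * (1 + b * (r - q))| := le_abs_self _
      _ ≤ √(((q + r) * (1 + b * (r - q))) ^ 2 * (1 - μ)) :=
        Real.abs_le_sqrt (excess_sq_le hb hq hr hbd hμ hB.le)
      _ = _ := by rw [Real.sqrt_mul (sq_nonneg _), Real.sqrt_sq hK]

end LinearDemand

open LinearDemand in
theorem stmt_7_general (c μ b p : ℝ)
    (hc : c ∈ Set.Ico (0 : ℝ) 1)
    (hb : b ∈ Set.Icc (0 : ℝ) (1 / (1 - c)))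
    (hp : p ∈ Set.Icc c 1)
    (heq : (p - c) * (1 + b * (1 - p)) = μ * (1 - c)) :
    (1 + b * (1 - p)) * (1 - p) / ((1 - c) * ((1 + b * (1 - p)) + (p - c) * (-b)))
      ≤ (1 + Real.sqrt (1 - μ)) / 2 := by
  obtain ⟨hb0, hb1⟩ := hb
  have hd : 1 - c = (p - c) + (1 - p) := by ring
  have hq : 0 ≤ p - c := by linarith [hp.1]
  have hr : 0 ≤ 1 - p := by linarith [hp.2]
  have hbd : b * ((p - c) + (1 - p)) ≤ 1 := by
    rw [← hd]; exact (le_div_iff₀ (by linarith [hc.2])).mp hb1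
  have hden : (1 - c) * ((1 + b * (1 - p)) + (p - c) * (-b))
      = (p - c + (1 - p)) * (1 + b * ((1 - p) - (p - c))) := by ring
  have key := excess_le_mul_sqrt hb0 hq hr hbd (hd ▸ heq)
  rw [hden]
  rcases (mul_nonneg (add_nonneg hq hr) (marginal_profit_nonneg hb0 hr hbd)).eq_or_lt
    with hzero | hpos
  · rw [← hzero, div_zero]; positivity
  · rw [div_le_iff₀ hpos]; linarith

/-- across the linear demand family x(p) = 1 + b(1-p), b ∈ [0,1/(1-c)],
pass-through at the equilibrium price never exceeds (1+√(1-μ))/2. -/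
theorem stmt_7 (c μ b p : ℝ)
    (hc : c ∈ Set.Ico (0 : ℝ) 1) (hμ : μ ∈ Set.Icc (0 : ℝ) 1)
    (hb : b ∈ Set.Icc (0 : ℝ) (1 / (1 - c)))
    (hp : p ∈ Set.Icc c 1)
    (heq : (p - c) * (1 + b * (1 - p)) = μ * (1 - c)) :
    (1 + b * (1 - p)) * (1 - p) / ((1 - c) * ((1 + b * (1 - p)) + (p - c) * (-b)))
      ≤ (1 + Real.sqrt (1 - μ)) / 2 :=
  stmt_7_general c μ b p hc hb hp heq
end
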